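/- If every asymptotic representation of a separable C*-algebra A taking values in D is asymptotically equivalent to zero (i.e. lim_{t→∞} φ_t(a) = 0 for all a ∈ A), then for any separable C*-algebra B the seminorm ‖·‖_{D,0} on A ⊙ B vanishes identically, and hence A ⊗_D B = A ⊗_min B. -/

import Mathlib

open Filter Topology
open scoped TensorProduct

/-- An asymptotic homomorphism (asymptotic representation when `D ⊆ 𝕃(H)`)
from `A` to `D`. -/
structure AsympHom (A D : Type*) [NormedRing A] [StarRing A] [NormedAlgebra ℂ A]
    [NormedRing D] [StarRing D] [NormedAlgebra ℂ D] where
  toFun : ℝ → A → D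
  cont : ∀ a : A, Continuous fun t => toFun t a
  lin_lim : ∀ (a b : A) (lam : ℂ),
    Tendsto (fun t => toFun t (a + lam • b) - toFun t a - lam • toFun t b) atTop (nhds 0)
  star_lim : ∀ a : A, Tendsto (fun t => toFun t (star a) - star (toFun t a)) atTop (nhds 0)
  mul_lim : ∀ a b : A,
    Tendsto (fun t => toFun t (a * b) - toFun t a * toFun t b) atTop (nhds 0)

/-!
Every `φ_t(a)` tends to `0`, so if all `ψ_t(b_i)` stayed bounded the asymptotic norm of
`Σ φ_t(a_i) ⊗ ψ_t(b_i)` would vanish. Otherwise, after padding the representation of `c` with a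
term `0 ⊗ b_i`, the sum `W t = Σ ψ_t(b_j)` is unbounded, and the asymptotic homomorphism
`φ_t ≡ δ(t) u` (constant in `a`, with `‖u‖ = 1` and `δ → 0` slowly, `δ = K / max_{[0,t]} ‖W‖`)
has asymptotic norm `limsup δ(t) ‖W t‖ ≥ K` for any `K`. So the set of asymptotic norms of `c`
contains `0` and is either contained in `(-∞, 0]` or unbounded above; in both cases its
`sSup` is `0`.
-/

open Set

lemma Real.sSup_eq_zero_of_zero_mem {S : Set ℝ} (h0 : (0 : ℝ) ∈ S)
    (hpos : ∀ r ∈ S, 0 < r → ¬BddAbove S) : sSup S = 0 := by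
  by_cases hS : BddAbove S
  · exact le_antisymm (csSup_le ⟨0, h0⟩ fun r hr => not_lt.1 fun hr0 => hpos r hr hr0 hS)
      (le_csSup hS h0)
  · -- the junk value `sSup S = 0` of an unbounded set
    exact Real.sSup_of_not_bddAbove hS

lemma frequently_lt_of_not_isBoundedUnder {α : Type*} {l : Filter α} {f : α → ℝ}
    (hf : ¬IsBoundedUnder (· ≤ ·) l f) (C : ℝ) : ∃ᶠ x in l, C < f x := by
  contrapose! hf
  exact ⟨C, by simpa using hf⟩

section RunningMax

variable {P : ℝ → ℝ}

/-- For `t ≥ 0` this is the maximum of `P` on `[0, t]`; rescaling the interval to `[0, 1]`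
makes continuity in `t` an instance of `IsCompact.continuous_sSup`. -/
noncomputable def runningMax (P : ℝ → ℝ) (t : ℝ) : ℝ :=
  sSup ((fun s => P (s * t)) '' Icc 0 1)

lemma continuous_runningMax (hP : Continuous P) : Continuous (runningMax P) :=
  isCompact_Icc.continuous_sSup (hP.comp (continuous_snd.mul continuous_fst))

lemma le_runningMax (hP : Continuous P) {s t : ℝ} (hs : 0 ≤ s) (hst : s ≤ t) :
    P s ≤ runningMax P t := by
  have hbdd : BddAbove ((fun u => P (u * t)) '' Icc 0 1) :=
    (isCompact_Icc.image (by fun_prop)).bddAbove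
  rcases hs.eq_or_lt with rfl | hs
  · exact le_csSup hbdd ⟨0, ⟨le_rfl, zero_le_one⟩, by simp⟩
  · have ht : 0 < t := hs.trans_le hst
    exact le_csSup hbdd ⟨s / t, ⟨by positivity, (div_le_one ht).2 hst⟩, by field_simp⟩

lemma runningMax_le {t M : ℝ} (ht : 0 ≤ t) (h : ∀ s ∈ Icc 0 t, P s ≤ M) :
    runningMax P t ≤ M := by
  refine csSup_le ((nonempty_Icc.2 zero_le_one).image _) ?_
  rintro _ ⟨u, hu, rfl⟩
  exact h _ ⟨mul_nonneg hu.1 ht, mul_le_of_le_one_left ht hu.2⟩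

variable (hP : Continuous P) (hunb : ∀ C, ∃ᶠ t in atTop, C < P t)
include hP hunb

lemma tendsto_runningMax : Tendsto (runningMax P) atTop atTop := by
  refine tendsto_atTop.2 fun C => ?_
  obtain ⟨s, hCs, hs⟩ := ((hunb C).and_eventually (eventually_ge_atTop 0)).exists
  filter_upwards [eventually_ge_atTop s] with t hst
  exact hCs.le.trans (le_runningMax hP hs hst)

lemma frequently_runningMax_le : ∃ᶠ t in atTop, runningMax P t ≤ P t := by
  refine frequently_atTop.2 fun T => ?_
  set T₀ := max T 0
  obtain ⟨s, hs, hPs⟩ := frequently_atTop.1 (hunb (runningMax P T₀)) T₀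
  obtain ⟨t, ht, hmax⟩ := isCompact_Icc.exists_isMaxOn
    (nonempty_Icc.2 ((le_max_right T 0).trans hs)) hP.continuousOn
  -- a maximiser of `P` on `[0, s]` is a record time, and it lies beyond `T₀` since `P s` beats
  -- every value of `P` on `[0, T₀]`
  have hT₀t : T₀ ≤ t := by
    by_contra! htT₀
    have hPst : P s ≤ P t := hmax ⟨(le_max_right T 0).trans hs, le_rfl⟩
    linarith [le_runningMax hP ht.1 htT₀.le]
  exact ⟨t, (le_max_left T 0).trans hT₀t,
    runningMax_le ht.1 fun u hu => hmax ⟨hu.1, hu.2.trans ht.2⟩⟩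

lemma exists_tendsto_zero_le_limsup_mul {K : ℝ} (hK : 0 ≤ K) :
    ∃ δ : ℝ → ℝ, Continuous δ ∧ (∀ t, 0 ≤ δ t) ∧ Tendsto δ atTop (𝓝 0) ∧
      K ≤ limsup (fun t => δ t * P t) atTop := by
  set Q : ℝ → ℝ := fun t => max (runningMax P t) 1
  have hQpos : ∀ t, 0 < Q t := fun t => one_pos.trans_le (le_max_right _ _)
  have hδQ : ∀ t, K / Q t * Q t = K := fun t => div_mul_cancel₀ K (hQpos t).ne'
  have hδ : ∀ t, 0 ≤ K / Q t := fun t => div_nonneg hK (hQpos t).le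
  refine ⟨fun t => K / Q t, ?_, hδ, ?_, le_limsup_of_frequently_le ?_
    (isBoundedUnder_of_eventually_le (a := K) ?_)⟩
  · exact continuous_const.div ((continuous_runningMax hP).max continuous_const)
      fun t => (hQpos t).ne'
  · exact tendsto_const_nhds.div_atTop
      (tendsto_atTop_mono (fun t => le_max_left _ _) (tendsto_runningMax hP hunb))
  · refine (frequently_runningMax_le hP hunb).mp ?_
    filter_upwards [(tendsto_runningMax hP hunb).eventually_ge_atTop 1] with t h1 hrec
    calc K = K / Q t * Q t := (hδQ t).symm
      _ ≤ K / Q t * P t := by gcongr; exact max_le hrec (h1.trans hrec)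
  · filter_upwards [eventually_ge_atTop 0] with t ht
    calc K / Q t * P t ≤ K / Q t * Q t :=
          mul_le_mul_of_nonneg_left ((le_runningMax hP ht le_rfl).trans (le_max_left _ _)) (hδ t)
      _ = K := hδQ t

end RunningMax

lemma TensorProduct.exists_fin_sum_tmul {R M N : Type*} [CommSemiring R] [AddCommMonoid M]
    [AddCommMonoid N] [Module R M] [Module R N] (c : M ⊗[R] N) :
    ∃ (n : ℕ) (a : Fin n → M) (b : Fin n → N), c = ∑ i, a i ⊗ₜ[R] b i := by
  obtain ⟨S, rfl⟩ := TensorProduct.exists_finset c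
  refine ⟨S.card, fun i => (S.equivFin.symm i).1.1, fun i => (S.equivFin.symm i).1.2, ?_⟩
  rw [← Finset.sum_coe_sort, ← S.equivFin.symm.sum_comp]

section CrossNorm

variable {E F : Type*} [SeminormedAddCommGroup E] [NormedSpace ℂ E]
  [SeminormedAddCommGroup F] [NormedSpace ℂ F] (ν : E ⊗[ℂ] F → ℝ)

lemma apply_sum_tmul_le (hν_add : ∀ x y, ν (x + y) ≤ ν x + ν y)
    (hν_cross : ∀ x y, ν (x ⊗ₜ[ℂ] y) = ‖x‖ * ‖y‖) {ι : Type*} (s : Finset ι) (x : ι → E)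
    (y : ι → F) : ν (∑ i ∈ s, x i ⊗ₜ[ℂ] y i) ≤ ∑ i ∈ s, ‖x i‖ * ‖y i‖ := by
  refine (Finset.le_sum_of_subadditive ν (by simpa using (hν_cross 0 0).le) hν_add s _).trans ?_
  simp only [hν_cross, le_refl]

lemma tendsto_apply_sum_tmul_zero (hν_nonneg : ∀ x, 0 ≤ ν x)
    (hν_add : ∀ x y, ν (x + y) ≤ ν x + ν y) (hν_cross : ∀ x y, ν (x ⊗ₜ[ℂ] y) = ‖x‖ * ‖y‖)
    {α ι : Type*} [Fintype ι] {l : Filter α} {x : α → ι → E} {y : α → ι → F}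
    (hx : ∀ i, Tendsto (fun t => x t i) l (𝓝 0))
    (hy : ∀ i, IsBoundedUnder (· ≤ ·) l fun t => ‖y t i‖) :
    Tendsto (fun t => ν (∑ i, x t i ⊗ₜ[ℂ] y t i)) l (𝓝 0) := by
  refine squeeze_zero (fun t => hν_nonneg _) (fun t => apply_sum_tmul_le ν hν_add hν_cross _ _ _) ?_
  have hy' : ∀ i, IsBoundedUnder (· ≤ ·) l ((‖·‖) ∘ fun t => ‖y t i‖) := by
    simpa [Function.comp_def] using hy
  have hx' : ∀ i, Tendsto (fun t => ‖x t i‖) l (𝓝 0) := by simpa using fun i => (hx i).norm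
  simpa using tendsto_finsetSum Finset.univ fun i _ => (hx' i).zero_mul_isBoundedUnder_le (hy' i)

end CrossNorm

lemma exists_sum_tmul_eq_not_isBoundedUnder {M N F : Type*} [AddCommMonoid M] [Module ℂ M]
    [AddCommMonoid N] [Module ℂ N] [SeminormedAddCommGroup F] (ψ : ℝ → N → F) {n : ℕ}
    (a : Fin n → M) (b : Fin n → N) (i : Fin n)
    (hi : ¬IsBoundedUnder (· ≤ ·) atTop fun t => ‖ψ t (b i)‖) :
    ∃ (m : ℕ) (a' : Fin m → M) (b' : Fin m → N), ∑ j, a' j ⊗ₜ[ℂ] b' j = ∑ j, a j ⊗ₜ[ℂ] b j ∧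
      ¬IsBoundedUnder (· ≤ ·) atTop fun t => ‖∑ j, ψ t (b' j)‖ := by
  by_contra! h
  -- padding with the term `0 ⊗ b i` adds `ψ t (b i)` to the sum of the `ψ`-images
  have h₀ := h n a b rfl
  have h₁ := h (n + 1) (Fin.cons 0 a) (Fin.cons (b i) b) (by simp [Fin.sum_univ_succ])
  refine hi ((isBoundedUnder_le_add h₁ h₀).mono_le (Eventually.of_forall fun t => ?_))
  simpa [Fin.sum_univ_succ] using norm_le_add_norm_add (ψ t (b i)) (∑ j, ψ t (b j))

namespace AsympHom

variable (A : Type*) {D : Type*} [NormedRing A] [StarRing A] [NormedAlgebra ℂ A]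
  [NormedRing D] [StarRing D] [NormedAlgebra ℂ D] [ContinuousStar D]

def const (d : ℝ → D) (hd : Continuous d) (hd0 : Tendsto d atTop (𝓝 0)) : AsympHom A D where
  toFun t _ := d t
  cont _ := hd
  lin_lim _ _ lam := by simpa using (hd0.const_smul lam).neg
  star_lim _ := by simpa using hd0.sub hd0.star
  mul_lim _ _ := by simpa using hd0.sub (hd0.mul hd0)

end AsympHom

section AsymptoticNorms

variable {A B D : Type*} [NormedRing A] [StarRing A] [NormedAlgebra ℂ A]
  [NormedRing B] [StarRing B] [NormedAlgebra ℂ B] [NormedRing D] [StarRing D] [NormedAlgebra ℂ D]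
  [ContinuousStar D] (ν : D ⊗[ℂ] D → ℝ)

/-- The set whose supremum is `‖c‖_{D,0}`. -/
def asymptoticNorms (c : A ⊗[ℂ] B) : Set ℝ :=
  {r : ℝ | ∃ (φ : AsympHom A D) (ψ : AsympHom B D) (n : ℕ) (a : Fin n → A) (b : Fin n → B),
    c = ∑ i, a i ⊗ₜ[ℂ] b i ∧
    r = limsup (fun t => ν (∑ i, φ.toFun t (a i) ⊗ₜ[ℂ] ψ.toFun t (b i))) atTop}

lemma zero_mem_asymptoticNorms (hν_cross : ∀ x y : D, ν (x ⊗ₜ[ℂ] y) = ‖x‖ * ‖y‖)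
    (c : A ⊗[ℂ] B) : (0 : ℝ) ∈ asymptoticNorms ν c := by
  obtain ⟨n, a, b, hc⟩ := TensorProduct.exists_fin_sum_tmul c
  refine ⟨.const A 0 continuous_const tendsto_const_nhds,
    .const B 0 continuous_const tendsto_const_nhds, n, a, b, hc, ?_⟩
  simpa [AsympHom.const] using (hν_cross 0 0).symm

lemma not_bddAbove_asymptoticNorms_of_not_isBoundedUnder
    (hν_cross : ∀ x y : D, ν (x ⊗ₜ[ℂ] y) = ‖x‖ * ‖y‖) (ψ : AsympHom B D) {c : A ⊗[ℂ] B}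
    {m : ℕ} {a : Fin m → A} {b : Fin m → B} (hc : c = ∑ j, a j ⊗ₜ[ℂ] b j)
    (hunb : ¬IsBoundedUnder (· ≤ ·) atTop fun t => ‖∑ j, ψ.toFun t (b j)‖) :
    ¬BddAbove (asymptoticNorms ν c) := by
  rintro ⟨M, hM⟩
  set W : ℝ → D := fun t => ∑ j, ψ.toFun t (b j)
  have hW : Continuous W := continuous_finsetSum _ fun j _ => ψ.cont (b j)
  obtain ⟨δ, hδ, hδ0, hδlim, hMδ⟩ := exists_tendsto_zero_le_limsup_mul (K := max M 0 + 1)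
    hW.norm (frequently_lt_of_not_isBoundedUnder hunb) (by positivity)
  obtain ⟨t₀, hWt₀⟩ := (frequently_lt_of_not_isBoundedUnder hunb 0).exists
  have : NontrivialTopology D := nontrivialTopology_iff_exists_norm_ne_zero.2 ⟨W t₀, hWt₀.ne'⟩
  obtain ⟨u, hu⟩ := exists_norm_eq D zero_le_one
  let φ := AsympHom.const A (fun t => (δ t : ℂ) • u) (by fun_prop)
    (by simpa using (Complex.continuous_ofReal.tendsto 0 |>.comp hδlim).smul_const u)
  have hφ : ∀ t, ν (∑ j, φ.toFun t (a j) ⊗ₜ[ℂ] ψ.toFun t (b j)) = δ t * ‖W t‖ := fun t => by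
    simp [φ, W, AsympHom.const, ← TensorProduct.tmul_sum, hν_cross, norm_smul, hu, hδ0 t]
  have := hM ⟨φ, ψ, m, a, b, hc, rfl⟩
  simp only [hφ] at this
  linarith [le_max_left M 0]

lemma not_bddAbove_asymptoticNorms (hν_nonneg : ∀ x, 0 ≤ ν x)
    (hν_add : ∀ x y, ν (x + y) ≤ ν x + ν y) (hν_cross : ∀ x y : D, ν (x ⊗ₜ[ℂ] y) = ‖x‖ * ‖y‖)
    (htriv : ∀ (φ : AsympHom A D) (a : A), Tendsto (fun t => φ.toFun t a) atTop (𝓝 0))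
    {c : A ⊗[ℂ] B} {r : ℝ} (hr : r ∈ asymptoticNorms ν c) (hr0 : 0 < r) :
    ¬BddAbove (asymptoticNorms ν c) := by
  obtain ⟨φ, ψ, n, a, b, hc, rfl⟩ := hr
  obtain ⟨i, hi⟩ : ∃ i, ¬IsBoundedUnder (· ≤ ·) atTop fun t => ‖ψ.toFun t (b i)‖ := by
    by_contra! hb
    exact hr0.ne' (tendsto_apply_sum_tmul_zero ν hν_nonneg hν_add hν_cross
      (fun i => htriv φ (a i)) hb).limsup_eq
  obtain ⟨m, a', b', hsum, hunb⟩ := exists_sum_tmul_eq_not_isBoundedUnder ψ.toFun a b i hi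
  exact not_bddAbove_asymptoticNorms_of_not_isBoundedUnder ν hν_cross ψ (hc.trans hsum.symm) hunb

end AsymptoticNorms

theorem tensor_D_eq_min_of_asymptotically_trivial_general
    {A B D : Type*}
    [NormedRing A] [StarRing A] [NormedAlgebra ℂ A]
    [NormedRing B] [StarRing B] [NormedAlgebra ℂ B]
    [NormedRing D] [StarRing D] [CStarRing D] [NormedAlgebra ℂ D]
    -- `ν` is the (minimal) C*-norm on `D ⊙ D`, used to measure the images:
    (ν : D ⊗[ℂ] D → ℝ)
    (hν_nonneg : ∀ x, 0 ≤ ν x)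
    (hν_add : ∀ x y, ν (x + y) ≤ ν x + ν y)
    (hν_cross : ∀ x y : D, ν (x ⊗ₜ[ℂ] y) = ‖x‖ * ‖y‖)
    -- every asymptotic representation of `A` in `D` is asymptotically zero:
    (htriv : ∀ (φ : AsympHom A D) (a : A), Tendsto (fun t => φ.toFun t a) atTop (nhds 0))
    -- the seminorm `‖·‖_{D,0}` on `A ⊙ B`:
    (p0 : A ⊗[ℂ] B → ℝ)
    (hp0 : ∀ c, p0 c = sSup {r : ℝ |
      ∃ (φ : AsympHom A D) (ψ : AsympHom B D) (n : ℕ) (a : Fin n → A) (b : Fin n → B),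
        c = ∑ i, a i ⊗ₜ[ℂ] b i ∧
        r = limsup (fun t => ν (∑ i, φ.toFun t (a i) ⊗ₜ[ℂ] ψ.toFun t (b i))) atTop})
    -- the minimal tensor norm on `A ⊙ B`:
    (pmin : A ⊗[ℂ] B → ℝ) (hpmin_nonneg : ∀ c, 0 ≤ pmin c) :
    (∀ c : A ⊗[ℂ] B, p0 c = 0) ∧
    (∀ c : A ⊗[ℂ] B, max (pmin c) (p0 c) = pmin c) := by
  have hp0_eq : ∀ c, p0 c = 0 := fun c => (hp0 c).trans <|
    Real.sSup_eq_zero_of_zero_mem (zero_mem_asymptoticNorms ν hν_cross c) fun _ hr hr0 =>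
      not_bddAbove_asymptoticNorms ν hν_nonneg hν_add hν_cross htriv hr hr0
  exact ⟨hp0_eq, fun c => by rw [hp0_eq c, max_eq_left (hpmin_nonneg c)]⟩

/-- If every asymptotic representation of `A` with values in `D` is asymptotically
equivalent to zero, then for every `B` the seminorm `‖·‖_{D,0}` on `A ⊙ B` (the supremum
over pairs `(φ, ψ)` of asymptotic representations of the asymptotic norms
`limsup_t ν(Σᵢ φ_t(aᵢ) ⊗ ψ_t(bᵢ))`, the norm `ν` being the minimal C*-norm on `D ⊙ D`)
vanishes identically; hence `‖·‖_D = max(‖·‖_min, ‖·‖_{D,0}) = ‖·‖_min`, i.e.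
`A ⊗_D B = A ⊗_min B`. -/
theorem tensor_D_eq_min_of_asymptotically_trivial
    {A B D : Type*}
    [NormedRing A] [StarRing A] [CStarRing A] [NormedAlgebra ℂ A] [StarModule ℂ A]
    [NormedRing B] [StarRing B] [CStarRing B] [NormedAlgebra ℂ B] [StarModule ℂ B]
    [NormedRing D] [StarRing D] [CStarRing D] [NormedAlgebra ℂ D] [StarModule ℂ D]
    -- `ν` is the (minimal) C*-norm on `D ⊙ D`, used to measure the images:
    (ν : D ⊗[ℂ] D → ℝ)
    (hν_nonneg : ∀ x, 0 ≤ ν x)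
    (hν_add : ∀ x y, ν (x + y) ≤ ν x + ν y)
    (hν_cross : ∀ x y : D, ν (x ⊗ₜ[ℂ] y) = ‖x‖ * ‖y‖)
    -- every asymptotic representation of `A` in `D` is asymptotically zero:
    (htriv : ∀ (φ : AsympHom A D) (a : A), Tendsto (fun t => φ.toFun t a) atTop (nhds 0))
    -- the seminorm `‖·‖_{D,0}` on `A ⊙ B`:
    (p0 : A ⊗[ℂ] B → ℝ)
    (hp0 : ∀ c, p0 c = sSup {r : ℝ |
      ∃ (φ : AsympHom A D) (ψ : AsympHom B D) (n : ℕ) (a : Fin n → A) (b : Fin n → B),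
        c = ∑ i, a i ⊗ₜ[ℂ] b i ∧
        r = limsup (fun t => ν (∑ i, φ.toFun t (a i) ⊗ₜ[ℂ] ψ.toFun t (b i))) atTop})
    -- the minimal tensor norm on `A ⊙ B`:
    (pmin : A ⊗[ℂ] B → ℝ) (hpmin_nonneg : ∀ c, 0 ≤ pmin c) :
    (∀ c : A ⊗[ℂ] B, p0 c = 0) ∧
    (∀ c : A ⊗[ℂ] B, max (pmin c) (p0 c) = pmin c) :=
  tensor_D_eq_min_of_asymptotically_trivial_general ν hν_nonneg hν_add hν_cross htriv p0 hp0 pmin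
    hpmin_nonneg
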